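/- arXiv:1608.03957 — 2 statements merged into one kernel-verified Lean document; each statement's English description precedes it below -/
import Mathlib

section
/- Let a be an integer with a ≡ 3 (mod 4). Then the Kronecker symbol κ_a : ℕ → ℤ is not eventually periodic: there do not exist integers N ≥ 0 and T ≥ 1 such that κ_a(n + T) = κ_a(n) for all n ≥ N. -/
/-!
For `a ≡ 3 (mod 4)` and odd `m ≡ 1 (mod |a|)`, quadratic reciprocity gives `J(a | m) = χ₄(m)`,
so `κ_a(2^e m) = χ₈(a)^e χ₄(m)` with `χ₈(a) ≠ 0`. Write a period as `T = 2^e u` with `u` odd.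
Adding `2|a|T` to `n = 2^e m` replaces `m` by `m + 2|a|u`, which is still `≡ 1 (mod |a|)` but
has the other residue mod 4; so `κ_a` changes sign, however large `n` is.
-/

/-- The Kronecker symbol `κ_a(n) = (a | n)` for `n : ℕ`. -/
def kron (a : ℤ) (n : ℕ) : ℤ :=
  if n = 0 then 0
  else (ZMod.χ₈ (a : ZMod 8)) ^ (padicValNat 2 n) * jacobiSym a (n / 2 ^ padicValNat 2 n)

open ZMod
open scoped NumberTheorySymbols

lemma χ₈_int_ne_zero_of_odd {a : ℤ} (ha : Odd a) : χ₈ a ≠ 0 := by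
  have ha2 : a % 2 = 1 := Int.odd_iff.mp ha
  rw [χ₈_int_eq_if_mod_eight, if_neg (by omega)]
  split_ifs <;> decide

namespace jacobiSym

theorem eq_χ₄_mul_of_three_mod_four {a : ℤ} (ha : a % 4 = 3) {m : ℕ} (hm : Odd m) :
    J(a | m) = χ₄ m * J(m | a.natAbs) := by
  rcases Int.natAbs_eq a with h | h
  · have hb : a.natAbs % 4 = 3 := by omega
    conv_lhs => rw [h]
    rcases Nat.odd_mod_four_iff.mp (Nat.odd_iff.mp hm) with hm4 | hm4
    · rw [χ₄_nat_one_mod_four hm4, one_mul, quadratic_reciprocity_one_mod_four'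
        (Nat.odd_iff.mpr (Nat.odd_of_mod_four_eq_three hb)) hm4]
    · rw [χ₄_nat_three_mod_four hm4, quadratic_reciprocity_three_mod_four hb hm4, neg_one_mul]
  · have hb : a.natAbs % 4 = 1 := by omega
    conv_lhs => rw [h]
    rw [jacobiSym.neg _ hm, quadratic_reciprocity_one_mod_four hb hm]

theorem eq_χ₄_of_three_mod_four {a : ℤ} (ha : a % 4 = 3) {m : ℕ} (hm : Odd m)
    (hm1 : m ≡ 1 [MOD a.natAbs]) : J(a | m) = χ₄ m := by
  rw [eq_χ₄_mul_of_three_mod_four ha hm, mod_left' (Int.natCast_modEq_iff.mpr hm1), Nat.cast_one,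
    one_left, mul_one]

end jacobiSym

lemma kron_two_pow_mul (a : ℤ) (e : ℕ) {m : ℕ} (hm : Odd m) :
    kron a (2 ^ e * m) = χ₈ a ^ e * J(a | m) := by
  have hval : padicValNat 2 (2 ^ e * m) = e := by
    rw [padicValNat.mul (pow_ne_zero _ two_ne_zero) hm.pos.ne', padicValNat.prime_pow,
      padicValNat.eq_zero_of_not_dvd hm.not_two_dvd_nat, add_zero]
  rw [kron, if_neg (mul_ne_zero (by positivity) hm.pos.ne'), hval,
    Nat.mul_div_cancel_left _ (by positivity)]

lemma kron_two_pow_mul_of_three_mod_four {a : ℤ} (ha : a % 4 = 3) (e : ℕ) {m : ℕ} (hm : Odd m)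
    (hm1 : m ≡ 1 [MOD a.natAbs]) : kron a (2 ^ e * m) = χ₈ a ^ e * χ₄ m := by
  rw [kron_two_pow_mul a e hm, jacobiSym.eq_χ₄_of_three_mod_four ha hm hm1]

lemma apply_add_mul_eq_of_forall_ge {α : Type*} {f : ℕ → α} {N T : ℕ}
    (h : ∀ n ≥ N, f (n + T) = f n) (k : ℕ) {n : ℕ} (hn : N ≤ n) : f (n + k * T) = f n := by
  induction k with
  | zero => simp
  | succ k ih => rw [add_one_mul, ← add_assoc, h _ (by omega), ih]

theorem kron_not_eventually_periodic_of_three_mod_four (a : ℤ) (h : a ≡ 3 [ZMOD 4]) :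
    ¬ ∃ N T : ℕ, 1 ≤ T ∧ ∀ n ≥ N, kron a (n + T) = kron a n := by
  have ha : a % 4 = 3 := h
  have hb : Odd a.natAbs := Int.natAbs_odd.mpr (Int.odd_iff.mpr (by omega))
  rintro ⟨N, T, hT, hper⟩
  obtain ⟨e, u, hu, rfl⟩ := Nat.exists_eq_two_pow_mul_odd (n := T) (by omega)
  set b := a.natAbs
  set m := 1 + b * (4 * N)
  set m' := 1 + b * (4 * N + 2 * u)
  have hm4 : m % 4 = 1 := by
    have : m = 4 * (b * N) + 1 := by ring
    omega
  have hm'4 : m' % 4 = 3 := by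
    have : m' = 4 * (b * N) + 2 * (b * u) + 1 := by ring
    have := Nat.odd_iff.mp (hb.mul hu)
    omega
  have hNm : N ≤ 2 ^ e * m :=
    calc N ≤ b * (4 * N) := by nlinarith [hb.pos]
      _ ≤ m := Nat.le_add_left _ _
      _ ≤ 2 ^ e * m := Nat.le_mul_of_pos_left _ (by positivity)
  have hkm : kron a (2 ^ e * m) = χ₈ a ^ e := by
    rw [kron_two_pow_mul_of_three_mod_four ha e (Nat.odd_iff.mpr (by omega))
      (Nat.add_mul_mod_self_left 1 b _), χ₄_nat_one_mod_four hm4, mul_one]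
  have hkm' : kron a (2 ^ e * m') = -χ₈ a ^ e := by
    rw [kron_two_pow_mul_of_three_mod_four ha e (Nat.odd_iff.mpr (by omega))
      (Nat.add_mul_mod_self_left 1 b _), χ₄_nat_three_mod_four hm'4, mul_neg_one]
  have hshift : 2 ^ e * m' = 2 ^ e * m + 2 * b * (2 ^ e * u) := by ring
  have hperiodic := apply_add_mul_eq_of_forall_ge hper (2 * b) hNm
  rw [← hshift, hkm, hkm'] at hperiodic
  have hχ := χ₈_int_ne_zero_of_odd (Int.odd_iff.mpr (by omega : a % 2 = 1))
  exact pow_ne_zero e hχ (by linarith)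
end

section
/- Let a be a nonzero integer. The Kronecker symbol κ_a agrees with a Dirichlet character — i.e., there exist an integer q ≥ 1 and a Dirichlet character χ mod q such that (κ_a(n) : ℂ) = χ(n) for all n ≥ 1 — if and only if a ≢ 3 (mod 4). -/
/-!
If `a ≡ 1 (mod 4)`, quadratic reciprocity turns `κ_a(n)` into `J(n | |a|)`, a character
mod `|a|`. If `a` is even, `κ_a` vanishes at even `n` and is periodic mod `4|a|` at odd `n`
(`jacobiSym.mod_right`), so it is a character mod `4|a|`. If `a ≡ 3 (mod 4)` and `χ` mod `q`
agrees with `κ_a`, then `q` is odd because `κ_a(2) = χ₈(a) ≠ 0`, and `m = 1 + 2q|a|` has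
`χ(m) = 1`, while reciprocity gives `κ_a(m) = -1` since `m ≡ 3 (mod 4)` and `m ≡ 1 (mod |a|)`.
-/

open ZMod
open scoped NumberTheorySymbols

theorem DirichletCharacter.exists_apply_natCast_eq_of_periodic {R : Type*}
    [CommMonoidWithZero R] {N : ℕ} [NeZero N] (f : ℕ → R) (hone : f 1 = 1)
    (hmul : ∀ m n, f (m * n) = f m * f n) (hper : Function.Periodic f N)
    (hzero : ∀ n, ¬ n.Coprime N → f n = 0) :
    ∃ χ : DirichletCharacter R N, ∀ n : ℕ, χ n = f n := by
  refine ⟨{ toFun := fun x ↦ f x.val, map_one' := ?_, map_mul' := ?_, map_nonunit' := ?_ },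
    fun n ↦ ?_⟩
  · simp only [val_one_eq_one_mod, hper.map_mod_nat, hone]
  · intro x y
    simp only [val_mul, hper.map_mod_nat, hmul]
  · intro x hx
    refine hzero _ fun h ↦ hx ?_
    rwa [← natCast_rightInverse x, isUnit_iff_coprime]
  · show f (n : ZMod N).val = f n
    rw [val_natCast, hper.map_mod_nat]

lemma two_pow_padicValNat_mul_div (n : ℕ) : 2 ^ padicValNat 2 n * (n / 2 ^ padicValNat 2 n) = n :=
  Nat.mul_div_cancel' pow_padicValNat_dvd

lemma odd_div_two_pow_padicValNat {n : ℕ} (hn : n ≠ 0) : Odd (n / 2 ^ padicValNat 2 n) := by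
  have := Nat.not_dvd_ordCompl Nat.prime_two hn
  rw [Nat.factorization_def _ Nat.prime_two] at this
  exact Nat.odd_iff.mpr (Nat.two_dvd_ne_zero.mp this)

lemma ZMod.χ₈_natAbs (a : ℤ) : χ₈ (a.natAbs : ZMod 8) = χ₈ a := by
  rcases Int.natAbs_eq a with h | h
  · conv_rhs => rw [h, Int.cast_natCast]
  · conv_rhs => rw [h, Int.cast_neg, Int.cast_natCast, ← neg_one_mul, map_mul]
    rw [show χ₈ (-1) = 1 by decide, one_mul]

lemma kron_of_ne_zero (a : ℤ) {n : ℕ} (hn : n ≠ 0) :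
    kron a n = χ₈ a ^ padicValNat 2 n * J(a | n / 2 ^ padicValNat 2 n) :=
  if_neg hn

lemma kron_of_odd (a : ℤ) {n : ℕ} (hn : Odd n) : kron a n = J(a | n) := by
  have hv : padicValNat 2 n = 0 :=
    padicValNat.eq_zero_of_not_dvd (by rwa [Nat.two_dvd_ne_zero, ← Nat.odd_iff])
  rw [kron_of_ne_zero a hn.pos.ne', hv, pow_zero, one_mul, pow_zero, Nat.div_one]

lemma kron_one (a : ℤ) : kron a 1 = 1 := by
  rw [kron_of_odd a odd_one, jacobiSym.one_right]

lemma kron_two (a : ℤ) : kron a 2 = χ₈ a := by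
  simp [kron_of_ne_zero, jacobiSym.one_right]

lemma kron_mul (a : ℤ) (m n : ℕ) : kron a (m * n) = kron a m * kron a n := by
  rcases eq_or_ne m 0 with rfl | hm
  · simp [kron]
  rcases eq_or_ne n 0 with rfl | hn
  · simp [kron]
  have hodd : (m * n) / 2 ^ padicValNat 2 (m * n)
      = (m / 2 ^ padicValNat 2 m) * (n / 2 ^ padicValNat 2 n) := by
    simpa [Nat.factorization_def _ Nat.prime_two] using Nat.ordCompl_mul m n 2
  have : NeZero (m / 2 ^ padicValNat 2 m) := ⟨(odd_div_two_pow_padicValNat hm).pos.ne'⟩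
  have : NeZero (n / 2 ^ padicValNat 2 n) := ⟨(odd_div_two_pow_padicValNat hn).pos.ne'⟩
  rw [kron_of_ne_zero a (mul_ne_zero hm hn), kron_of_ne_zero a hm, kron_of_ne_zero a hn, hodd,
    padicValNat.mul hm hn, pow_add, jacobiSym.mul_right]
  ring

lemma kron_eq_zero_of_two_dvd {a : ℤ} (ha : 2 ∣ a) {n : ℕ} (hn : 2 ∣ n) : kron a n = 0 := by
  rcases eq_or_ne n 0 with rfl | hn0
  · simp [kron]
  have hχ : χ₈ a = 0 := by
    obtain ⟨k, rfl⟩ := ha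
    rw [Int.cast_mul, map_mul, show χ₈ ((2 : ℤ) : ZMod 8) = 0 by decide, zero_mul]
  have hv : padicValNat 2 n ≠ 0 := Nat.one_le_iff_ne_zero.mp (one_le_padicValNat_of_dvd hn0 hn)
  rw [kron_of_ne_zero a hn0, hχ, zero_pow hv, zero_mul]

theorem jacobiSym.quadratic_reciprocity_int_one_mod_four {a : ℤ} (ha : a % 4 = 1) {m : ℕ}
    (hm : Odd m) : J(a | m) = J(m | a.natAbs) := by
  obtain ⟨b, rfl | rfl⟩ := Int.eq_nat_or_neg a
  · exact jacobiSym.quadratic_reciprocity_one_mod_four (by omega) hm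
  · have hb : b % 4 = 3 := by omega
    rw [jacobiSym.neg _ hm, Int.natAbs_neg, Int.natAbs_natCast]
    rcases Nat.odd_mod_four_iff.mp (Nat.odd_iff.mp hm) with hm4 | hm4
    · rw [χ₄_nat_one_mod_four hm4, one_mul,
        jacobiSym.quadratic_reciprocity_one_mod_four' (Nat.odd_iff.mpr (by omega)) hm4]
    · rw [χ₄_nat_three_mod_four hm4, jacobiSym.quadratic_reciprocity_three_mod_four hb hm4,
        neg_one_mul, neg_neg]

theorem jacobiSym.quadratic_reciprocity_int_three_mod_four {a : ℤ} (ha : a % 4 = 3) {m : ℕ}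
    (hm : Odd m) : J(a | m) = χ₄ m * J(m | a.natAbs) := by
  have h := jacobiSym.neg (-a) hm
  rw [neg_neg] at h
  rw [h, jacobiSym.quadratic_reciprocity_int_one_mod_four (by omega) hm, Int.natAbs_neg]

lemma kron_eq_jacobiSym_natAbs {a : ℤ} (ha : a % 4 = 1) {n : ℕ} (hn : n ≠ 0) :
    kron a n = J(n | a.natAbs) := by
  have hb : Odd a.natAbs := by rw [Int.natAbs_odd, Int.odd_iff]; omega
  conv_rhs => rw [← two_pow_padicValNat_mul_div n]
  rw [kron_of_ne_zero a hn, Nat.cast_mul, Nat.cast_pow, jacobiSym.mul_left, jacobiSym.pow_left,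
    Nat.cast_ofNat, jacobiSym.at_two hb, χ₈_natAbs,
    jacobiSym.quadratic_reciprocity_int_one_mod_four ha (odd_div_two_pow_padicValNat hn)]

lemma kron_periodic_of_two_dvd {a : ℤ} (ha : 2 ∣ a) :
    Function.Periodic (kron a) (4 * a.natAbs) := by
  intro n
  have h4 : 2 ∣ 4 * a.natAbs := dvd_mul_of_dvd_left (by norm_num) _
  rcases Nat.even_or_odd n with hn | hn
  · rw [kron_eq_zero_of_two_dvd ha hn.two_dvd,
      kron_eq_zero_of_two_dvd ha ((Nat.dvd_add_right hn.two_dvd).mpr h4)]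
  · have hn' : Odd (n + 4 * a.natAbs) := hn.add_even (even_iff_two_dvd.mpr h4)
    rw [kron_of_odd a hn, kron_of_odd a hn', jacobiSym.mod_right a hn, jacobiSym.mod_right a hn',
      Nat.add_mod_right]

lemma kron_eq_zero_of_not_coprime {a : ℤ} (ha : 2 ∣ a) {n : ℕ}
    (hn : ¬ n.Coprime (4 * a.natAbs)) : kron a n = 0 := by
  rcases Nat.even_or_odd n with he | ho
  · exact kron_eq_zero_of_two_dvd ha he.two_dvd
  rw [kron_of_odd a ho, jacobiSym.eq_zero_iff]
  refine ⟨ho.pos.ne', fun h ↦ hn ?_⟩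
  have h2 : n.Coprime 2 := Nat.coprime_two_right.mpr ho
  exact (h2.mul_right h2).mul_right (Nat.coprime_comm.mp h)

lemma kron_eq_neg_one_of_emod_four_eq_three {a : ℤ} (ha : a % 4 = 3) {m : ℕ} (hm : m % 4 = 3)
    (hma : m ≡ 1 [MOD a.natAbs]) : kron a m = -1 := by
  have hodd : Odd m := Nat.odd_iff.mpr (by omega)
  have hma' : (m : ℤ) % a.natAbs = 1 % a.natAbs := by exact_mod_cast hma
  rw [kron_of_odd a hodd, jacobiSym.quadratic_reciprocity_int_three_mod_four ha hodd,
    χ₄_nat_three_mod_four hm, jacobiSym.mod_left' hma', jacobiSym.one_left, mul_one]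

lemma exists_kron_ne_of_modEq_three {a : ℤ} (h3 : a ≡ 3 [ZMOD 4]) {R : Type*} [CommRing R]
    [CharZero R] {q : ℕ} (χ : DirichletCharacter R q) : ∃ n, 1 ≤ n ∧ (kron a n : R) ≠ χ n := by
  have ha : a % 4 = 3 := h3
  by_cases hq : Odd q
  · have hm4 : (1 + a.natAbs * (2 * q)) % 4 = 3 := by
      have hb : Odd a.natAbs := Int.natAbs_odd.mpr (Int.odd_iff.mpr (by omega))
      obtain ⟨k, hk⟩ := hb.mul hq
      rw [mul_left_comm, hk]
      omega
    have hm1 : ((1 + a.natAbs * (2 * q) : ℕ) : ZMod q) = 1 := by simp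
    refine ⟨1 + a.natAbs * (2 * q), by omega, ?_⟩
    rw [kron_eq_neg_one_of_emod_four_eq_three ha hm4 (Nat.add_mul_mod_self_left 1 _ _), hm1,
      map_one]
    norm_num
  · refine ⟨2, by norm_num, ?_⟩
    have h2 : ¬ IsUnit ((2 : ℕ) : ZMod q) := by
      rwa [isUnit_iff_coprime, Nat.coprime_two_left]
    have hχ₈ : χ₈ a ≠ 0 := by
      rw [χ₈_int_eq_if_mod_eight]
      split_ifs <;> omega
    rw [χ.map_nonunit h2, kron_two]
    exact_mod_cast hχ₈

lemma exists_dirichletCharacter_eq_jacobiSym (b : ℕ) [NeZero b] :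
    ∃ χ : DirichletCharacter ℤ b, ∀ n : ℕ, χ n = J(n | b) :=
  DirichletCharacter.exists_apply_natCast_eq_of_periodic _ (jacobiSym.one_left b)
    (fun m n ↦ by rw [Nat.cast_mul, jacobiSym.mul_left])
    (fun n ↦ jacobiSym.mod_left' (by rw [Nat.cast_add, Int.add_emod_right]))
    fun _ hn ↦ jacobiSym.eq_zero_iff.mpr ⟨NeZero.ne b, by rwa [Int.gcd_natCast_natCast]⟩

lemma exists_dirichletCharacter_eq_kron_of_two_dvd {a : ℤ} (ha : a ≠ 0) (h2 : 2 ∣ a) :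
    ∃ χ : DirichletCharacter ℤ (4 * a.natAbs), ∀ n : ℕ, χ n = kron a n :=
  have : NeZero (4 * a.natAbs) := ⟨by simpa using ha⟩
  DirichletCharacter.exists_apply_natCast_eq_of_periodic _ (kron_one a) (kron_mul a)
    (kron_periodic_of_two_dvd h2) fun _ ↦ kron_eq_zero_of_not_coprime h2

lemma exists_dirichletCharacter_eq_kron {a : ℤ} (ha : a ≠ 0) (h3 : ¬ a ≡ 3 [ZMOD 4]) :
    ∃ q, 1 ≤ q ∧ ∃ χ : DirichletCharacter ℤ q, ∀ n : ℕ, 1 ≤ n → χ n = kron a n := by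
  have hb : a.natAbs ≠ 0 := Int.natAbs_ne_zero.mpr ha
  rcases Int.emod_two_eq_zero_or_one a with h2 | h2
  · obtain ⟨χ, hχ⟩ := exists_dirichletCharacter_eq_kron_of_two_dvd ha (Int.dvd_of_emod_eq_zero h2)
    exact ⟨4 * a.natAbs, by omega, χ, fun n _ ↦ hχ n⟩
  · have ha1 : a % 4 = 1 := by rw [Int.ModEq] at h3; omega
    have : NeZero a.natAbs := ⟨hb⟩
    obtain ⟨χ, hχ⟩ := exists_dirichletCharacter_eq_jacobiSym a.natAbs
    exact ⟨a.natAbs, by omega, χ, fun n hn ↦ by rw [hχ, kron_eq_jacobiSym_natAbs ha1 (by omega)]⟩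

theorem kron_eq_dirichlet_character_iff (a : ℤ) (ha : a ≠ 0) :
    (∃ (q : ℕ), 1 ≤ q ∧ ∃ χ : DirichletCharacter ℂ q,
        ∀ n : ℕ, 1 ≤ n → (kron a n : ℂ) = χ (n : ZMod q)) ↔ ¬ a ≡ 3 [ZMOD 4] := by
  refine ⟨fun ⟨q, _, χ, hχ⟩ h3 ↦ ?_, fun h3 ↦ ?_⟩
  · obtain ⟨n, hn, hne⟩ := exists_kron_ne_of_modEq_three h3 χ
    exact hne (hχ n hn)
  · obtain ⟨q, hq, χ, hχ⟩ := exists_dirichletCharacter_eq_kron ha h3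
    exact ⟨q, hq, χ.ringHomComp (Int.castRingHom ℂ), fun n hn ↦ by simp [hχ n hn]⟩
end
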